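/- Let A be a Banach algebra and φ a non-zero multiplicative linear functional on A such that the norm-closure of the linear span of products A·ker(φ) equals ker(φ). If A is left φ-biflat, then A is left φ-amenable. -/

import Mathlib

/-!
We realize the bidual `(B ⊗_p B)**` of the projective tensor product of a Banach algebra `B`
with itself canonically as the dual of the Banach space `B →L[ℂ] B* ` of bounded bilinear
forms on `B` (the latter being isometrically isomorphic to `(B ⊗_p B)*`).  All the canonical
Banach `B`-bimodule actions are spelled out explicitly through this identification.
The multiplication of the Banach algebra `B` is encoded as a bounded bilinear map
`μ : B →L[ℂ] B →L[ℂ] B` (for a Banach algebra `A`, `μ = ContinuousLinearMap.mul ℂ A`).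
-/

noncomputable section

open ContinuousLinearMap NormedSpace

/-- The space of bounded bilinear forms on `B`, canonically the dual of the projective
tensor product `B ⊗_p B`. -/
abbrev BilForm (B : Type*) [NormedAddCommGroup B] [NormedSpace ℂ B] : Type _ :=
  B →L[ℂ] StrongDual ℂ B

instance (B : Type*) [NormedAddCommGroup B] [NormedSpace ℂ B] : NormedAddCommGroup (BilForm B) :=
  inferInstanceAs (NormedAddCommGroup (B →L[ℂ] StrongDual ℂ B))

instance (B : Type*) [NormedAddCommGroup B] [NormedSpace ℂ B] : NormedSpace ℂ (BilForm B) :=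
  inferInstanceAs (NormedSpace ℂ (B →L[ℂ] StrongDual ℂ B))

/-- The bidual of the projective tensor product `B ⊗_p B`, realized canonically as the dual of
the Banach space of bounded bilinear forms on `B`. -/
abbrev TensorBidual (B : Type*) [NormedAddCommGroup B] [NormedSpace ℂ B] : Type _ :=
  StrongDual ℂ (BilForm B)

/-- The bidual `B**` of a normed space `B`. -/
abbrev Bidual (B : Type*) [NormedAddCommGroup B] [NormedSpace ℂ B] : Type _ :=
  StrongDual ℂ (StrongDual ℂ B)

variable {B : Type*} [NormedAddCommGroup B] [NormedSpace ℂ B]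

/-- The left action of `a ∈ B` (with multiplication `μ`) on `(B ⊗_p B)**`:
`(a • T) β = T ((x, y) ↦ β (a x, y))`, the canonical bidual extension of the
`B`-bimodule action `a • (x ⊗ y) = (a x) ⊗ y` on `B ⊗_p B`. -/
def tensorLSmul (μ : B →L[ℂ] B →L[ℂ] B) (a : B) (T : TensorBidual B) : TensorBidual B :=
  T.comp ((compL ℂ B B (StrongDual ℂ B)).flip (μ a))

/-- The right action of `a ∈ B` on `(B ⊗_p B)**`:
`(T • a) β = T ((x, y) ↦ β (x, y a))`, the canonical bidual extension of the
`B`-bimodule action `(x ⊗ y) • a = x ⊗ (y a)` on `B ⊗_p B`. -/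
def tensorRSmul (μ : B →L[ℂ] B →L[ℂ] B) (T : TensorBidual B) (a : B) : TensorBidual B :=
  T.comp (compL ℂ B (StrongDual ℂ B) (StrongDual ℂ B) ((compL ℂ B B ℂ).flip (μ.flip a)))

/-- `π_B^* ψ`, the image of a functional `ψ ∈ B*` under the adjoint of the product
morphism `π_B : B ⊗_p B → B`; as a bilinear form it is `(x, y) ↦ ψ (x y)`.  Thus
`π_B** T ψ = T (piDual μ ψ)` for `T ∈ (B ⊗_p B)**`. -/
def piDual (μ : B →L[ℂ] B →L[ℂ] B) (ψ : StrongDual ℂ B) : BilForm B :=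
  (compL ℂ B B ℂ ψ).comp μ

/-- The left action of `a ∈ B` on the bidual `B**`: `(a • m) f = m (f ∘ (a * ·))`. -/
def bidualLSmul (μ : B →L[ℂ] B →L[ℂ] B) (a : B) (m : Bidual B) : Bidual B :=
  m.comp ((compL ℂ B B ℂ).flip (μ a))

/-- A Banach algebra `B` (with multiplication `μ` and a multiplicative functional `ψ`) is
*left `ψ`-biflat* if there is a bounded linear map `ρ : B → (B ⊗_p B)**` with
`ρ (a b) = ψ (b) ρ (a) = a • ρ (b)` for all `a, b ∈ B`, and `ψ̃ ∘ π_B** ∘ ρ = ψ`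
(note `(ψ̃ ∘ π_B**) T = T (piDual μ ψ)`). -/
def IsLeftBiflat (μ : B →L[ℂ] B →L[ℂ] B) (ψ : StrongDual ℂ B) : Prop :=
  ∃ ρ : B →L[ℂ] TensorBidual B,
    (∀ a b : B, ρ (μ a b) = ψ b • ρ a ∧ ρ (μ a b) = tensorLSmul μ a (ρ b)) ∧
    ∀ a : B, ρ a (piDual μ ψ) = ψ a

/-- A Banach algebra `B` is *left `ψ`-amenable* if there is `m ∈ B**` with
`a • m = ψ (a) m` for all `a ∈ B` and `ψ̃ (m) = m (ψ) = 1`. -/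
def IsLeftAmenable (μ : B →L[ℂ] B →L[ℂ] B) (ψ : StrongDual ℂ B) : Prop :=
  ∃ m : Bidual B, (∀ (a : B) (f : StrongDual ℂ B), m (f.comp (μ a)) = ψ a * m f) ∧ m ψ = 1

variable {A : Type*} [NonUnitalNormedRing A] [NormedSpace ℂ A]
  [IsScalarTower ℂ A A] [SMulCommClass ℂ A A] [CompleteSpace A]

/-!
Left `φ`-biflatness gives `ρ : A → (A ⊗_p A)**` with `ρ (a l) = φ (l) ρ (a)`, so `ρ` vanishes on
`A · ker φ`, hence on the closure of its span, which is `ker φ`. Thus `ρ = φ (·) ρ (a₀)` for any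
`a₀` with `φ (a₀) = 1`, and then `a · ρ (a₀) = ρ (a a₀) = ρ (a) = φ (a) ρ (a₀)`. Hence
`m = π_A** (ρ (a₀))` satisfies `a · m = φ (a) m` and `φ̃ (m) = φ (a₀) = 1`.
-/

theorem LinearMap.eq_smul_of_ker_le {R M N : Type*} [CommRing R] [AddCommGroup M] [Module R M]
    [AddCommGroup N] [Module R N] {ψ : M →ₗ[R] R} {g : M →ₗ[R] N}
    (h : ψ.ker ≤ g.ker) {a₀ : M} (ha₀ : ψ a₀ = 1) (b : M) :
    g b = ψ b • g a₀ := by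
  have hb : b - ψ b • a₀ ∈ ψ.ker := by simp [ha₀]
  simpa [sub_eq_zero] using h hb

def piDualCLM (μ : B →L[ℂ] B →L[ℂ] B) : StrongDual ℂ B →L[ℂ] BilForm B :=
  ((compL ℂ B (B →L[ℂ] B) (StrongDual ℂ B)).flip μ).comp (compL ℂ B B ℂ)

theorem piDual_comp (μ : B →L[ℂ] B →L[ℂ] B) (hassoc : ∀ a x y, μ (μ a x) y = μ a (μ x y))
    (f : StrongDual ℂ B) (a : B) :
    piDual μ (f.comp (μ a)) = (piDual μ f).comp (μ a) := by
  ext x y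
  simp [piDual, hassoc]

theorem ker_le_ker_of_map_mul_eq_smul {E : Type*} [NormedAddCommGroup E] [NormedSpace ℂ E]
    {μ : B →L[ℂ] B →L[ℂ] B} {ψ : StrongDual ℂ B} {ρ : B →L[ℂ] E}
    (hρ : ∀ a l, ρ (μ a l) = ψ l • ρ a)
    (hker : {x | ψ x = 0} ⊆ closure (Submodule.span ℂ {x | ∃ a l, ψ l = 0 ∧ x = μ a l} : Set B)) :
    ψ.ker ≤ ρ.ker := by
  have hspan : Submodule.span ℂ {x | ∃ a l, ψ l = 0 ∧ x = μ a l} ≤ ρ.ker := by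
    rw [Submodule.span_le]
    rintro _ ⟨a, l, hl, rfl⟩
    simp [hρ, hl]
  exact fun x hx => closure_minimal hspan ρ.isClosed_ker (hker hx)

theorem isLeftAmenable_of_tensorLSmul_eq_smul {μ : B →L[ℂ] B →L[ℂ] B} {ψ : StrongDual ℂ B}
    (hassoc : ∀ a x y, μ (μ a x) y = μ a (μ x y)) {T : TensorBidual B}
    (hT : ∀ a, tensorLSmul μ a T = ψ a • T) (hT_one : T (piDual μ ψ) = 1) :
    IsLeftAmenable μ ψ := by
  refine ⟨T.comp (piDualCLM μ), fun a f => ?_, hT_one⟩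
  calc T (piDual μ (f.comp (μ a)))
      = tensorLSmul μ a T (piDual μ f) := by rw [piDual_comp μ hassoc]; rfl
    _ = ψ a * T (piDual μ f) := by rw [hT]; rfl

theorem IsLeftBiflat.isLeftAmenable {μ : B →L[ℂ] B →L[ℂ] B} {ψ : StrongDual ℂ B}
    (hassoc : ∀ a x y, μ (μ a x) y = μ a (μ x y)) (hψ : ψ ≠ 0)
    (hker : {x | ψ x = 0} ⊆ closure (Submodule.span ℂ {x | ∃ a l, ψ l = 0 ∧ x = μ a l} : Set B))
    (h : IsLeftBiflat μ ψ) : IsLeftAmenable μ ψ := by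
  obtain ⟨ρ, hρ, hρπ⟩ := h
  obtain ⟨a₀, ha₀⟩ : ∃ a₀, ψ a₀ = 1 :=
    LinearMap.surjective_iff_ne_zero.2 (fun h0 => hψ (ContinuousLinearMap.coe_injective h0)) 1
  have hρ_eq : ∀ b, ρ b = ψ b • ρ a₀ :=
    LinearMap.eq_smul_of_ker_le (g := (ρ : B →ₗ[ℂ] TensorBidual B))
      (ker_le_ker_of_map_mul_eq_smul (fun a l => (hρ a l).1) hker) ha₀
  refine isLeftAmenable_of_tensorLSmul_eq_smul hassoc (T := ρ a₀) (fun a => ?_) (by rw [hρπ, ha₀])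
  rw [← (hρ a a₀).2, (hρ a a₀).1, ha₀, one_smul, hρ_eq]

theorem left_phi_biflat_implies_left_phi_amenable_general
    (φ : A →L[ℂ] ℂ) (hφ_ne : φ ≠ 0)
    (hker : closure (Submodule.span ℂ {x : A | ∃ a l : A, φ l = 0 ∧ x = a * l} : Set A)
      = {x : A | φ x = 0})
    (hbf : IsLeftBiflat (ContinuousLinearMap.mul ℂ A) φ) :
    IsLeftAmenable (ContinuousLinearMap.mul ℂ A) φ :=
  hbf.isLeftAmenable mul_assoc hφ_ne hker.ge

/-- Lemma 2.1: if `A` is a Banach algebra, `φ` a non-zero multiplicative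
linear functional on `A` such that the norm-closure of the linear span of the set of
products `A · ker φ` equals `ker φ`, and `A` is left `φ`-biflat, then `A` is left
`φ`-amenable. -/
theorem left_phi_biflat_implies_left_phi_amenable
    (φ : A →L[ℂ] ℂ) (hφ_ne : φ ≠ 0)
    (hφ_mul : ∀ a b : A, φ (a * b) = φ a * φ b)
    (hker : closure (Submodule.span ℂ {x : A | ∃ a l : A, φ l = 0 ∧ x = a * l} : Set A)
      = {x : A | φ x = 0})
    (hbf : IsLeftBiflat (ContinuousLinearMap.mul ℂ A) φ) :
    IsLeftAmenable (ContinuousLinearMap.mul ℂ A) φ :=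
  left_phi_biflat_implies_left_phi_amenable_general φ hφ_ne hker hbf
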